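/- If S is a relatively weakly compact subset of a Banach space E, then for every weakly unconditionally Cauchy series ∑ x_n^* in the dual E^*, one has x_n^*(x) → 0 as n → ∞ uniformly for x in S. -/

import Mathlib

open MeasureTheory Filter Topology
open scoped Real ENNReal ZeroAtInfty

noncomputable section

set_option maxHeartbeats 1000000

/-- A subset of a normed space is *relatively weakly compact* if its closure in the weak
topology is weakly compact. -/
def RelativelyWeaklyCompact (𝕜 : Type*) [NontriviallyNormedField 𝕜] {E : Type*}
    [SeminormedAddCommGroup E] [NormedSpace 𝕜 E] (K : Set E) : Prop :=
  IsCompact (closure (toWeakSpace 𝕜 E '' K))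


namespace WucAux

abbrev L1 : Type := lp (fun _ : ℕ => ℝ) 1

lemma abs_sign_le (r : ℝ) : |Real.sign r| ≤ 1 := by
  rcases lt_trichotomy r 0 with h|h|h
  · simp [Real.sign_of_neg h]
  · simp [h]
  · simp [Real.sign_of_pos h]

lemma sign_mul_self (r : ℝ) : Real.sign r * r = |r| := by
  rcases lt_trichotomy r 0 with h|h|h
  · rw [Real.sign_of_neg h, abs_of_neg h]; ring
  · simp [h]
  · rw [Real.sign_of_pos h, abs_of_pos h]; ring

lemma l1_abs_summable (f : L1) : Summable fun m => |f m| := by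
  have := (lp.memℓp f).summable (p := 1) (by norm_num)
  simpa [Real.norm_eq_abs] using this

lemma l1_tsum_abs_eq (f : L1) : ∑' m, |f m| = ‖f‖ := by
  rw [lp.norm_eq_tsum_rpow (by norm_num) f]
  simp [Real.norm_eq_abs]

end WucAux

namespace WucAux

lemma mul_summable {φ : ℕ → ℝ} (hφ : ∀ m, |φ m| ≤ 1) (f : L1) :
    Summable fun m => φ m * f m := by
  refine Summable.of_abs (Summable.of_nonneg_of_le (fun m => abs_nonneg _)
    (fun m => ?_) (l1_abs_summable f))
  rw [abs_mul]
  calc |φ m| * |f m| ≤ 1 * |f m| := by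
        exact mul_le_mul_of_nonneg_right (hφ m) (abs_nonneg _)
    _ = |f m| := one_mul _

lemma abs_tsum_mul_le {φ : ℕ → ℝ} (hφ : ∀ m, |φ m| ≤ 1) (f : L1) :
    |∑' m, φ m * f m| ≤ ‖f‖ := by
  rw [← l1_tsum_abs_eq f]
  have h1 : |∑' m, φ m * f m| ≤ ∑' m, |φ m * f m| := by
    have := norm_tsum_le_tsum_norm (f := fun m => φ m * f m) ?_
    · simpa [Real.norm_eq_abs, abs_mul] using this
    · simpa [Real.norm_eq_abs, abs_mul] using (mul_summable hφ f).abs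
  refine h1.trans ?_
  refine Summable.tsum_le_tsum (fun m => ?_) ((mul_summable hφ f).abs) (l1_abs_summable f)
  rw [abs_mul]
  calc |φ m| * |f m| ≤ 1 * |f m| :=
        mul_le_mul_of_nonneg_right (hφ m) (abs_nonneg _)
    _ = |f m| := one_mul _

/-- The continuous linear functional on `ℓ¹` given by a bounded sequence of signs. -/
def philin (φ : ℕ → ℝ) (hφ : ∀ m, |φ m| ≤ 1) : L1 →L[ℝ] ℝ :=
  LinearMap.mkContinuous
    { toFun := fun f => ∑' m, φ m * f m
      map_add' := fun f g => by
        simp only [lp.coeFn_add, Pi.add_apply, mul_add]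
        exact Summable.tsum_add (mul_summable hφ f) (mul_summable hφ g)
      map_smul' := fun c f => by
        simp only [lp.coeFn_smul, Pi.smul_apply, smul_eq_mul, RingHom.id_apply]
        rw [← tsum_mul_left]
        congr 1; funext m; ring }
    1 (fun f => by simpa [Real.norm_eq_abs] using abs_tsum_mul_le hφ f)

@[simp] lemma philin_apply (φ : ℕ → ℝ) (hφ : ∀ m, |φ m| ≤ 1) (f : L1) :
    philin φ hφ f = ∑' m, φ m * f m := rfl

/-- The coordinate functional on `ℓ¹`. -/
def coordfn (m : ℕ) : L1 →L[ℝ] ℝ :=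
  LinearMap.mkContinuous
    { toFun := fun f => f m
      map_add' := fun f g => by simp [lp.coeFn_add]
      map_smul' := fun c f => by simp [lp.coeFn_smul] }
    1 (fun f => by
        rw [one_mul]; exact lp.norm_apply_le_norm (by norm_num) f m)

@[simp] lemma coordfn_apply (m : ℕ) (f : L1) : coordfn m f = f m := rfl

end WucAux

namespace WucAux

lemma tail_small (f : L1) {δ : ℝ} (hδ : 0 < δ) : ∀ᶠ N in atTop, ∑' m, |f (m + N)| < δ := by
  have h := tendsto_sum_nat_add (fun m => |f m|)
  have : ∀ᶠ r in 𝓝 (0:ℝ), r < δ := tendsto_id.eventually_lt_const hδ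
  exact h.eventually this

lemma tail_mono (f : L1) {N N' : ℕ} (h : N ≤ N') :
    ∑' m, |f (m + N')| ≤ ∑' m, |f (m + N)| := by
  have hsum := l1_abs_summable f
  have e1 := Summable.sum_add_tsum_nat_add (f := fun m => |f m|) N hsum
  have e2 := Summable.sum_add_tsum_nat_add (f := fun m => |f m|) N' hsum
  have hmono : ∑ i ∈ Finset.range N, |f i| ≤ ∑ i ∈ Finset.range N', |f i| :=
    Finset.sum_le_sum_of_subset_of_nonneg (Finset.range_subset_range.2 h)
      (fun i _ _ => abs_nonneg _)
  linarith

end WucAux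

namespace WucAux

lemma summable_shift (f : L1) (k : ℕ) : Summable fun m => |f (m + k)| :=
  (summable_nat_add_iff k).2 (l1_abs_summable f)

lemma abs_tsum_tail_le {φ : ℕ → ℝ} (hφ : ∀ m, |φ m| ≤ 1) (f : L1) (k : ℕ) :
    |∑' m, φ (m + k) * f (m + k)| ≤ ∑' m, |f (m + k)| := by
  have hs : Summable fun m => |φ (m + k) * f (m + k)| := by
    refine Summable.of_nonneg_of_le (fun m => abs_nonneg _) (fun m => ?_) (summable_shift f k)
    rw [abs_mul]
    calc |φ (m+k)| * |f (m+k)| ≤ 1 * |f (m+k)| :=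
          mul_le_mul_of_nonneg_right (hφ _) (abs_nonneg _)
      _ = |f (m+k)| := one_mul _
  have h1 : |∑' m, φ (m + k) * f (m + k)| ≤ ∑' m, |φ (m + k) * f (m + k)| := by
    have := norm_tsum_le_tsum_norm (f := fun m => φ (m + k) * f (m + k)) ?_
    · simpa [Real.norm_eq_abs, abs_mul] using this
    · simpa [Real.norm_eq_abs, abs_mul] using hs
  refine h1.trans (Summable.tsum_le_tsum (fun m => ?_) hs (summable_shift f k))
  rw [abs_mul]
  calc |φ (m+k)| * |f (m+k)| ≤ 1 * |f (m+k)| :=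
        mul_le_mul_of_nonneg_right (hφ _) (abs_nonneg _)
    _ = |f (m+k)| := one_mul _

lemma hump_core {ε : ℝ} (hε : 0 < ε) (a : ℕ → L1) (b : L1)
    (hfun : ∀ ψ : L1 →L[ℝ] ℝ, Tendsto (fun k => ψ (a k)) atTop (𝓝 (ψ b)))
    (n : ℕ → ℕ) (hn : StrictMono n) (hbig : ∀ k, ε ≤ |a k (n k)|) : False := by
  have hδ : 0 < ε / 8 := by positivity
  have hcoord : ∀ m, Tendsto (fun k => a k m) atTop (𝓝 (b m)) := by
    intro m; simpa using hfun (coordfn m)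
  obtain ⟨M, hM⟩ := (tail_small b hδ).exists
  -- step 1: choose an index with large coordinate and head close to b
  have hstep : ∀ N : ℕ, ∃ k, N < n k ∧
      ∑ m ∈ Finset.range (N + 1), |a k m - b m| < ε / 8 := by
    intro N
    have h1 : ∀ᶠ k in atTop, N < n k := hn.tendsto_atTop.eventually_gt_atTop N
    have h2 : Tendsto (fun k => ∑ m ∈ Finset.range (N + 1), |a k m - b m|) atTop (𝓝 0) := by
      have h := tendsto_finset_sum (Finset.range (N + 1))
        (fun m _ => (((hcoord m).sub tendsto_const_nhds).abs :
          Tendsto (fun k => |a k m - b m|) atTop (𝓝 |b m - b m|)))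
      simpa using h
    exact (h1.and (h2.eventually_lt_const hδ)).exists
  choose nextj hnextj1 hnextj2 using hstep
  -- step 2: choose a block end beyond which the chosen element has a small tail
  have hstep2 : ∀ N : ℕ, ∃ N', N < N' ∧ n (nextj N) ≤ N' ∧
      ∑' m, |a (nextj N) (m + (N' + 1))| < ε / 8 := by
    intro N
    have h2 : ∀ᶠ N' : ℕ in atTop, ∑' m, |a (nextj N) (m + (N' + 1))| < ε / 8 :=
      (tendsto_add_atTop_nat 1).eventually (tail_small (a (nextj N)) hδ)
    have h1 : ∀ᶠ N' in atTop, N < N' ∧ n (nextj N) ≤ N' :=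
      (eventually_gt_atTop N).and (eventually_ge_atTop (n (nextj N)))
    obtain ⟨N', h1', h2'⟩ := (h1.and h2).exists
    exact ⟨N', h1'.1, h1'.2, h2'⟩
  choose nextN hlt hnle hNtail using hstep2
  -- the block boundaries
  set Nseq : ℕ → ℕ := fun i => Nat.rec M (fun _ prev => nextN prev) i with hNseq
  have hNseq0 : Nseq 0 = M := rfl
  have hNsucc : ∀ i, Nseq (i + 1) = nextN (Nseq i) := fun i => rfl
  have hNmono : StrictMono Nseq := strictMono_nat_of_lt_succ (fun i => hlt (Nseq i))
  set J : ℕ → ℕ := fun i => nextj (Nseq i) with hJ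
  have hnJ1 : ∀ i, Nseq i < n (J i) := fun i => hnextj1 (Nseq i)
  have hnJ2 : ∀ i, n (J i) ≤ Nseq (i + 1) := fun i => by
    rw [hNsucc]; exact hnle (Nseq i)
  have happrox : ∀ i, ∑ m ∈ Finset.range (Nseq i + 1), |a (J i) m - b m| < ε / 8 :=
    fun i => hnextj2 (Nseq i)
  have htails : ∀ i, ∑' m, |a (J i) (m + (Nseq (i + 1) + 1))| < ε / 8 := fun i => by
    rw [hNsucc]; exact hNtail (Nseq i)
  -- the sign sequence
  have hex : ∀ m : ℕ, ∃ i, m ≤ Nseq (i + 1) := fun m =>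
    ⟨m, le_trans hNmono.le_apply (hNmono.monotone (Nat.le_succ m))⟩
  set idx : ℕ → ℕ := fun m => Nat.find (hex m) with hidxdef
  set φ : ℕ → ℝ := fun m => if M < m then Real.sign (a (J (idx m)) m) else 0 with hφdef
  have hφ : ∀ m, |φ m| ≤ 1 := by
    intro m
    by_cases h : M < m
    · simp only [hφdef, if_pos h]; exact abs_sign_le _
    · simp [hφdef, if_neg h]
  have hidx : ∀ i m, Nseq i < m → m ≤ Nseq (i + 1) → idx m = i := by
    intro i m h1 h2
    rw [hidxdef]
    rw [Nat.find_eq_iff]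
    refine ⟨h2, fun j hj hle => ?_⟩
    have : Nseq (j + 1) ≤ Nseq i := hNmono.monotone (Nat.succ_le_of_lt hj)
    omega
  have hφblock : ∀ i m, Nseq i < m → m ≤ Nseq (i + 1) → φ m = Real.sign (a (J i) m) := by
    intro i m h1 h2
    have hMm : M < m := lt_of_le_of_lt (hNseq0 ▸ hNmono.monotone (Nat.zero_le i)) h1
    rw [hφdef]; simp only [if_pos hMm, hidx i m h1 h2]
  set ψ : L1 →L[ℝ] ℝ := philin φ hφ with hψ
  have hgap : ∀ i, 5 * (ε / 8) ≤ ψ (a (J i)) - ψ b := by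
    intro i
    set A : L1 := a (J i) with hA
    set lo := Nseq i with hlo
    set hi := Nseq (i + 1) with hhi
    have hlohi : lo + 1 ≤ hi + 1 := by
      have h : Nseq i < Nseq (i + 1) := hNmono (show i < i + 1 by omega)
      omega
    have hsA : Summable fun m => φ m * A m := mul_summable hφ A
    have hsb : Summable fun m => φ m * b m := mul_summable hφ b
    have splitA : ψ A = ∑ m ∈ Finset.range (hi + 1), φ m * A m
        + ∑' m, φ (m + (hi + 1)) * A (m + (hi + 1)) :=
      (philin_apply φ hφ A).trans (Summable.sum_add_tsum_nat_add (hi + 1) hsA).symm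
    have splitb : ψ b = ∑ m ∈ Finset.range (lo + 1), φ m * b m
        + ∑' m, φ (m + (lo + 1)) * b (m + (lo + 1)) :=
      (philin_apply φ hφ b).trans (Summable.sum_add_tsum_nat_add (lo + 1) hsb).symm
    have headsplit : ∑ m ∈ Finset.range (hi + 1), φ m * A m
        = ∑ m ∈ Finset.range (lo + 1), φ m * A m
          + ∑ m ∈ Finset.Ico (lo + 1) (hi + 1), φ m * A m :=
      (Finset.sum_range_add_sum_Ico _ hlohi).symm
    have E1 : |∑ m ∈ Finset.range (lo + 1), φ m * A m
        - ∑ m ∈ Finset.range (lo + 1), φ m * b m| ≤ ε / 8 := by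
      rw [← Finset.sum_sub_distrib]
      refine (Finset.abs_sum_le_sum_abs _ _).trans ?_
      refine le_of_lt (lt_of_le_of_lt ?_ (happrox i))
      refine Finset.sum_le_sum (fun m _ => ?_)
      have hrw : φ m * A m - φ m * b m = φ m * (A m - b m) := by ring
      rw [hrw, abs_mul]
      calc |φ m| * |A m - b m| ≤ 1 * |A m - b m| :=
            mul_le_mul_of_nonneg_right (hφ m) (abs_nonneg _)
        _ = |A m - b m| := one_mul _
    have E2 : ε ≤ ∑ m ∈ Finset.Ico (lo + 1) (hi + 1), φ m * A m := by
      have hterm : ∀ m ∈ Finset.Ico (lo + 1) (hi + 1), φ m * A m = |A m| := by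
        intro m hm
        rw [Finset.mem_Ico] at hm
        rw [hφblock i m (by omega) (by omega), sign_mul_self]
      rw [Finset.sum_congr rfl hterm]
      have hmem : n (J i) ∈ Finset.Ico (lo + 1) (hi + 1) := by
        rw [Finset.mem_Ico]
        refine ⟨?_, ?_⟩
        · have := hnJ1 i; omega
        · have := hnJ2 i; omega
      have hbig' : ε ≤ |A (n (J i))| := hbig (J i)
      exact hbig'.trans (Finset.single_le_sum (f := fun m => |A m|)
        (fun m _ => abs_nonneg _) hmem)
    have E3 : |∑' m, φ (m + (hi + 1)) * A (m + (hi + 1))| ≤ ε / 8 :=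
      (abs_tsum_tail_le hφ A (hi + 1)).trans (le_of_lt (htails i))
    have E4 : |∑' m, φ (m + (lo + 1)) * b (m + (lo + 1))| ≤ ε / 8 := by
      refine (abs_tsum_tail_le hφ b (lo + 1)).trans ?_
      refine le_trans (tail_mono b ?_) (le_of_lt hM)
      have : M ≤ lo := hNseq0 ▸ hNmono.monotone (Nat.zero_le i)
      omega
    have h1 := abs_le.1 E1
    have h3 := abs_le.1 E3
    have h4 := abs_le.1 E4
    rw [splitA, headsplit, splitb]
    linarith
  have h2 : Tendsto (fun k => |ψ (a k) - ψ b|) atTop (𝓝 0) := by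
    have := ((hfun ψ).sub (tendsto_const_nhds (x := ψ b))).abs
    simpa using this
  obtain ⟨k₀, hk₀⟩ := eventually_atTop.1
    (h2.eventually_lt_const (show (0:ℝ) < ε / 2 by positivity))
  set B := (Finset.range k₀).sup n with hB
  have hJB : k₀ ≤ J (B + 1) := by
    by_contra hcon
    push_neg at hcon
    have hb1 : n (J (B + 1)) ≤ B := Finset.le_sup (Finset.mem_range.2 hcon)
    have hb2 := hnJ1 (B + 1)
    have hb3 : B + 1 ≤ Nseq (B + 1) := hNmono.le_apply
    omega
  have hlt2 := hk₀ (J (B + 1)) hJB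
  have hge := hgap (B + 1)
  have habs := le_abs_self (ψ (a (J (B + 1))) - ψ b)
  linarith


end WucAux

namespace WucAux

lemma eval_weak_continuous (ψ : L1 →L[ℝ] ℝ) :
    Continuous fun f : WeakSpace ℝ L1 => ψ ((toWeakSpace ℝ L1).symm f) :=
  WeakBilin.eval_continuous ((topDualPairing ℝ L1).flip) ψ

lemma l1_compact_coord (T : Set (WeakSpace ℝ L1)) (hT : IsCompact T)
    {ε : ℝ} (hε : 0 < ε) (a : ℕ → L1) (haT : ∀ k, toWeakSpace ℝ L1 (a k) ∈ T)
    (n : ℕ → ℕ) (hn : StrictMono n) (hbig : ∀ k, ε ≤ |a k (n k)|) : False := by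
  haveI : CompactSpace T := isCompact_iff_compactSpace.mp hT
  set c : T → (ℕ → ℝ) := fun f m => ((toWeakSpace ℝ L1).symm f.1) m with hc
  have hc_cont : Continuous c := by
    refine continuous_pi (fun m => ?_)
    exact (eval_weak_continuous (coordfn m)).comp continuous_subtype_val
  have hc_inj : Function.Injective c := by
    intro f g hfg
    apply Subtype.ext
    have h1 : (toWeakSpace ℝ L1).symm f.1 = (toWeakSpace ℝ L1).symm g.1 :=
      lp.ext (funext fun m => congrFun hfg m)
    exact (toWeakSpace ℝ L1).symm.injective h1
  haveI : TopologicalSpace.MetrizableSpace T :=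
    (hc_cont.isClosedEmbedding hc_inj).toIsEmbedding.metrizableSpace
  set A : ℕ → T := fun k => ⟨toWeakSpace ℝ L1 (a k), haT k⟩ with hA
  obtain ⟨b, φm, hφm, hconv⟩ := SeqCompactSpace.tendsto_subseq A
  have hconv' : Tendsto (fun i => (A (φm i) : WeakSpace ℝ L1)) atTop (𝓝 (b : WeakSpace ℝ L1)) :=
    (continuous_subtype_val.tendsto b).comp hconv
  set bl : L1 := (toWeakSpace ℝ L1).symm (b : WeakSpace ℝ L1) with hbl
  have hfun : ∀ ψ : L1 →L[ℝ] ℝ, Tendsto (fun i => ψ (a (φm i))) atTop (𝓝 (ψ bl)) := by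
    intro ψ
    have h := ((eval_weak_continuous ψ).tendsto _).comp hconv'
    simpa [Function.comp_def, hA, hbl] using h
  exact hump_core hε (fun i => a (φm i)) bl hfun (n ∘ φm) (hn.comp hφm)
    (fun i => hbig (φm i))

end WucAux

namespace WucAux

open NormedSpace

variable {E : Type*} [NormedAddCommGroup E] [NormedSpace ℝ E] [CompleteSpace E]

lemma exists_bound (x : ℕ → StrongDual ℝ E)
    (hWUC : ∀ Φ : StrongDual ℝ (StrongDual ℝ E), Summable fun n => ‖Φ (x n)‖) :
    ∃ C : ℝ, 0 ≤ C ∧ ∀ (y : E) (F : Finset ℕ), ∑ n ∈ F, |x n y| ≤ C * ‖y‖ := by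
  set g : {q : Finset ℕ × (ℕ → ℝ) // ∀ n, |q.2 n| ≤ 1} →
      StrongDual ℝ (StrongDual ℝ (StrongDual ℝ E)) := fun q =>
    inclusionInDoubleDual ℝ (StrongDual ℝ E) (∑ n ∈ q.1.1, q.1.2 n • x n) with hg
  have hpt : ∀ Φ : StrongDual ℝ (StrongDual ℝ E), ∃ C, ∀ q, ‖g q Φ‖ ≤ C := by
    intro Φ
    refine ⟨∑' n, ‖Φ (x n)‖, fun q => ?_⟩
    have hq : g q Φ = ∑ n ∈ q.1.1, q.1.2 n * Φ (x n) := by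
      rw [hg]
      simp [dual_def, map_sum, _root_.map_smul, smul_eq_mul]
    rw [hq, Real.norm_eq_abs]
    refine (Finset.abs_sum_le_sum_abs _ _).trans ?_
    refine (Finset.sum_le_sum (fun n _ => ?_)).trans
      (Summable.sum_le_tsum _ (fun n _ => norm_nonneg _) (hWUC Φ))
    rw [abs_mul]
    calc |q.1.2 n| * |Φ (x n)| ≤ 1 * |Φ (x n)| :=
          mul_le_mul_of_nonneg_right (q.2 n) (abs_nonneg _)
      _ = ‖Φ (x n)‖ := by rw [one_mul, Real.norm_eq_abs]
  obtain ⟨C', hC'⟩ := banach_steinhaus hpt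
  refine ⟨max C' 0, le_max_right _ _, fun y F => ?_⟩
  set q : {q : Finset ℕ × (ℕ → ℝ) // ∀ n, |q.2 n| ≤ 1} :=
    ⟨(F, fun n => Real.sign (x n y)), fun n => abs_sign_le _⟩ with hqdef
  have h1 : g q (inclusionInDoubleDual ℝ E y) = ∑ n ∈ F, |x n y| := by
    rw [hg]
    simp only [dual_def]
    rw [ContinuousLinearMap.sum_apply]
    exact Finset.sum_congr rfl (fun n _ => by
      rw [ContinuousLinearMap.smul_apply, smul_eq_mul, sign_mul_self])
  have h2 : ‖g q (inclusionInDoubleDual ℝ E y)‖ ≤ C' * ‖y‖ := by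
    refine (ContinuousLinearMap.le_opNorm _ _).trans ?_
    exact mul_le_mul (hC' q) (double_dual_bound ℝ E y) (norm_nonneg (inclusionInDoubleDual ℝ E y))
      ((norm_nonneg _).trans (hC' q))
  have h3 : ∑ n ∈ F, |x n y| ≤ C' * ‖y‖ := by
    rw [← h1]
    exact (le_abs_self _).trans (by rwa [← Real.norm_eq_abs])
  refine h3.trans (mul_le_mul_of_nonneg_right (le_max_left _ _) (norm_nonneg _))

end WucAux

open WucAux NormedSpace in
theorem tendstoUniformlyOn_of_wuc'
    {E : Type*} [NormedAddCommGroup E] [NormedSpace ℝ E] [CompleteSpace E]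
    (S : Set E) (hS : IsCompact (closure (toWeakSpace ℝ E '' S)))
    (x : ℕ → StrongDual ℝ E)
    (hWUC : ∀ Φ : StrongDual ℝ (StrongDual ℝ E),
      Summable fun n => ‖Φ (x n)‖) :
    TendstoUniformlyOn (fun n y => x n y) 0 atTop S := by
  classical
  obtain ⟨C, hC0, hC⟩ := WucAux.exists_bound x hWUC
  have hsum : ∀ y : E, Summable fun n => |x n y| := fun y =>
    summable_of_sum_le (fun n => abs_nonneg _) (fun F => hC y F)
  have htsum : ∀ y : E, ∑' n, |x n y| ≤ C * ‖y‖ := fun y =>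
    Summable.tsum_le_of_sum_le (hsum y) (hC y)
  have hmem : ∀ y : E, Memℓp (fun n => x n y) 1 := fun y => memℓp_gen (by
    simpa [Real.norm_eq_abs] using hsum y)
  set U : E →L[ℝ] WucAux.L1 := LinearMap.mkContinuous
    { toFun := fun y => (⟨fun n => x n y, hmem y⟩ : WucAux.L1)
      map_add' := fun y z => by
        apply lp.ext
        rw [lp.coeFn_add]
        funext n
        simp
      map_smul' := fun c y => by
        apply lp.ext
        rw [lp.coeFn_smul]
        funext n
        simp }
    C (fun y => by
      rw [lp.norm_eq_tsum_rpow (by norm_num)]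
      simpa [Real.norm_eq_abs] using htsum y) with hU
  rw [Metric.tendstoUniformlyOn_iff]
  by_contra hcon
  push_neg at hcon
  obtain ⟨ε, hε, hfreq⟩ := hcon
  have hfreq' : ∃ᶠ n in atTop, ∃ y ∈ S, ε ≤ |x n y| := by
    refine hfreq.mono (fun n hn => ?_)
    obtain ⟨y, hyS, hy⟩ := hn
    refine ⟨y, hyS, ?_⟩
    simpa [Real.dist_eq, abs_sub_comm] using hy
  obtain ⟨nk, hnk, hP⟩ := Filter.extraction_of_frequently_atTop hfreq'
  choose y hyS hybig using hP
  set T : Set (WeakSpace ℝ WucAux.L1) :=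
    WeakSpace.map U '' (closure (toWeakSpace ℝ E '' S)) with hT
  have hTc : IsCompact T := hS.image (WeakSpace.map U).continuous
  have hmemT : ∀ k, toWeakSpace ℝ WucAux.L1 (U (y k)) ∈ T := by
    intro k
    exact ⟨toWeakSpace ℝ E (y k), subset_closure ⟨y k, hyS k, rfl⟩, rfl⟩
  have hbig' : ∀ k, ε ≤ |U (y k) (nk k)| := fun k => hybig k
  exact absurd (WucAux.l1_compact_coord T hTc hε (fun k => U (y k)) hmemT nk hnk hbig') not_false


/-- If `S` is a relatively weakly compact subset of a Banach space `E`,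
then for every weakly unconditionally Cauchy series `∑ xₙ*` in the dual `E*`, one has
`xₙ*(x) → 0` uniformly for `x ∈ S`. -/
theorem tendstoUniformlyOn_of_wuc
    {E : Type*} [NormedAddCommGroup E] [NormedSpace ℝ E] [CompleteSpace E]
    (S : Set E) (hS : RelativelyWeaklyCompact ℝ S)
    (x : ℕ → StrongDual ℝ E)
    (hWUC : ∀ Φ : StrongDual ℝ (StrongDual ℝ E),
      Summable fun n => ‖Φ (x n)‖) :
    TendstoUniformlyOn (fun n y => x n y) 0 atTop S := by
  have hS' : IsCompact (closure (toWeakSpace ℝ E '' S)) := hS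
  exact tendstoUniformlyOn_of_wuc' S hS' x hWUC
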